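/- arXiv:0812.0405 — 2 statements merged into one kernel-verified Lean document; each statement's English description precedes it below -/
import Mathlib

section
/- Let γ_AB be a bipartite state on ℂ^{d_A} ⊗ ℂ^{d_B}. If rank γ_AB < rank γ_A, then γ_AB is not separable. -/
/-!
Absorbing `√λᵢ` into `bᵢ`, a separable `γ` is `∑ᵢ |aᵢ ⊗ bᵢ⟩⟨aᵢ ⊗ bᵢ|`, so
`rank γ = dim span {aᵢ ⊗ bᵢ}`, while `Tr_B γ = ∑ᵢ ‖bᵢ‖² |aᵢ⟩⟨aᵢ|` has rank
`dim span {‖bᵢ‖ aᵢ}`. If the `‖bᵢ‖ aᵢ` with `i ∈ S` form a basis of the latter span, then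
every `bᵢ` with `i ∈ S` is nonzero, and slicing a vanishing combination of the `aᵢ ⊗ bᵢ`
along a coordinate of `B` where `bᵢ` is nonzero shows that the `aᵢ ⊗ bᵢ`, `i ∈ S`, are
linearly independent. Hence `rank Tr_B γ ≤ rank γ` for every separable `γ`.
-/

open Matrix Kronecker
open scoped ComplexOrder

noncomputable section

/-- `|v⟩⟨v|`, the rank-one matrix `v v*`. -/
def ketBra {d : ℕ} (v : Fin d → ℂ) : Matrix (Fin d) (Fin d) ℂ :=
  vecMulVec v (star v)

/-- Partial trace over the `B` factor: `(Tr_B γ)_{jk} = Σ_m γ_{(j,m),(k,m)}`. -/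
def trB {dA dB : ℕ} (γ : Matrix (Fin dA × Fin dB) (Fin dA × Fin dB) ℂ) :
    Matrix (Fin dA) (Fin dA) ℂ :=
  Matrix.of fun j k => ∑ m : Fin dB, γ (j, m) (k, m)

/-- Partial trace over the `A` factor: `(Tr_A γ)_{mn} = Σ_j γ_{(j,m),(j,n)}`. -/
def trA {dA dB : ℕ} (γ : Matrix (Fin dA × Fin dB) (Fin dA × Fin dB) ℂ) :
    Matrix (Fin dB) (Fin dB) ℂ :=
  Matrix.of fun m n => ∑ j : Fin dA, γ (j, m) (j, n)

/-- A positive semidefinite matrix indexed by `(Fin dA) × (Fin dB)` is separable if it is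
a finite positive combination of Kronecker products `|a⟩⟨a| ⊗ |b⟩⟨b|`. -/
def MatrixSeparable {dA dB : ℕ} (γ : Matrix (Fin dA × Fin dB) (Fin dA × Fin dB) ℂ) : Prop :=
  ∃ (n : ℕ) (lam : Fin n → ℝ) (a : Fin n → Fin dA → ℂ) (b : Fin n → Fin dB → ℂ),
    (∀ i, 0 ≤ lam i) ∧
      γ = ∑ i, (lam i : ℂ) • (ketBra (a i) ⊗ₖ ketBra (b i))

section LinearIndependence

universe u

variable {K V W : Type*} {ι : Type u} [Field K] [AddCommGroup V] [Module K V] [AddCommGroup W]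
  [Module K W]

theorem finrank_span_range_le_of_linearIndependent_comp [Finite ι] (u : ι → V) (w : ι → W)
    (h : ∀ (κ : Type u) (f : κ → ι), LinearIndependent K (u ∘ f) → LinearIndependent K (w ∘ f)) :
    Module.finrank K (Submodule.span K (Set.range u)) ≤
      Module.finrank K (Submodule.span K (Set.range w)) := by
  obtain ⟨κ, f, hf, hspan, hli⟩ := exists_linearIndependent' K u
  have := Finite.of_injective f hf
  have := Fintype.ofFinite κ
  have : FiniteDimensional K (Submodule.span K (Set.range w)) :=
    FiniteDimensional.span_of_finite K (Set.finite_range w)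
  calc Module.finrank K (Submodule.span K (Set.range u))
      = Fintype.card κ := by rw [← hspan, finrank_span_eq_card hli]
    _ = Module.finrank K (Submodule.span K (Set.range (w ∘ f))) :=
        (finrank_span_eq_card (h κ f hli)).symm
    _ ≤ Module.finrank K (Submodule.span K (Set.range w)) :=
        Submodule.finrank_mono (Submodule.span_mono (Set.range_comp_subset_range f w))

variable {m n : Type*}

theorem LinearIndependent.kronecker {a : ι → m → K} {b : ι → n → K} (ha : LinearIndependent K a)
    (hb : ∀ i, b i ≠ 0) : LinearIndependent K (fun i (p : m × n) => a i p.1 * b i p.2) := by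
  rw [linearIndependent_iff'] at ha ⊢
  intro s g hsum i hi
  obtain ⟨k, hk⟩ := Function.ne_iff.mp (hb i)
  have hslice : ∀ k, ∑ j ∈ s, (g j * b j k) • a j = 0 := fun k => by
    ext x
    simpa [Finset.sum_apply, mul_comm, mul_left_comm, mul_assoc] using congrFun hsum (x, k)
  exact (mul_eq_zero.mp (ha s _ (hslice k) i hi)).resolve_right hk

theorem finrank_span_range_smul_le_finrank_span_range_kronecker [Finite ι] (a : ι → m → K)
    (b : ι → n → K) (c : ι → K) (hc : ∀ i, b i = 0 → c i = 0) :
    Module.finrank K (Submodule.span K (Set.range fun i => c i • a i)) ≤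
      Module.finrank K (Submodule.span K (Set.range fun i (p : m × n) => a i p.1 * b i p.2)) := by
  refine finrank_span_range_le_of_linearIndependent_comp _ _ fun κ f hli => ?_
  have hc0 : ∀ k, c (f k) ≠ 0 := fun k h0 => hli.ne_zero k (by simp [h0])
  have ha : LinearIndependent K (a ∘ f) := by
    have hscale : a ∘ f = (fun k => (Units.mk0 _ (hc0 k))⁻¹) • ((fun i => c i • a i) ∘ f) := by
      ext k : 1
      simp [Units.smul_def, smul_smul, hc0]
    exact hscale ▸ hli.units_smul _
  exact ha.kronecker fun k h0 => hc0 k (hc _ h0)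

end LinearIndependence

theorem Matrix.rank_sum_vecMulVec_star {R ι n : Type*} [Field R] [PartialOrder R] [StarRing R]
    [StarOrderedRing R] [Fintype ι] [Fintype n] (w : ι → n → R) :
    (∑ i, vecMulVec (w i) (star (w i))).rank =
      Module.finrank R (Submodule.span R (Set.range w)) := by
  have hfactor : ∑ i, vecMulVec (w i) (star (w i)) = (of w)ᵀ * (of w)ᵀᴴ := by
    ext p q
    simp [mul_apply, sum_apply, vecMulVec_apply]
  rw [hfactor, rank_self_mul_conjTranspose, rank_transpose, rank_eq_finrank_span_row]
  rfl

theorem ketBra_kronecker_ketBra {dA dB : ℕ} (a : Fin dA → ℂ) (b : Fin dB → ℂ) :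
    ketBra a ⊗ₖ ketBra b =
      vecMulVec (fun p => a p.1 * b p.2) (star fun p : Fin dA × Fin dB => a p.1 * b p.2) := by
  ext p q
  simp only [ketBra, kroneckerMap_apply, vecMulVec_apply, Pi.star_apply, star_mul']
  ring

theorem ofReal_smul_ketBra {d : ℕ} {r : ℝ} (hr : 0 ≤ r) (v : Fin d → ℂ) :
    (r : ℂ) • ketBra v = ketBra ((√r : ℂ) • v) := by
  have hsq : (√r : ℂ) * star (√r : ℂ) = r := by
    rw [Complex.star_def, Complex.conj_ofReal, ← Complex.ofReal_mul, Real.mul_self_sqrt hr]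
  rw [ketBra, ketBra, star_smul, smul_vecMulVec, vecMulVec_smul, smul_smul, hsq]

theorem trace_ketBra {d : ℕ} (v : Fin d → ℂ) :
    (ketBra v).trace = ((∑ m, Complex.normSq (v m) : ℝ) : ℂ) := by
  simp [ketBra, dotProduct, Complex.mul_conj]

theorem trB_sum_kronecker {ι : Type*} [Fintype ι] {dA dB : ℕ}
    (A : ι → Matrix (Fin dA) (Fin dA) ℂ) (B : ι → Matrix (Fin dB) (Fin dB) ℂ) :
    trB (∑ i, A i ⊗ₖ B i) = ∑ i, (B i).trace • A i := by
  ext j k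
  simp only [trB, of_apply, Matrix.sum_apply, kroneckerMap_apply, Matrix.smul_apply, trace,
    diag_apply, smul_eq_mul, Finset.sum_mul]
  rw [Finset.sum_comm]
  exact Finset.sum_congr rfl fun i _ => Finset.sum_congr rfl fun m _ => mul_comm _ _

theorem not_separable_of_rank_lt_rank_marginal_general {dA dB : ℕ}
    (γ : Matrix (Fin dA × Fin dB) (Fin dA × Fin dB) ℂ)
    (hrank : γ.rank < (trB γ).rank) :
    ¬ MatrixSeparable γ := by
  rintro ⟨n, lam, a, b, hlam, rfl⟩
  set β : Fin n → Fin dB → ℂ := fun i => (√(lam i) : ℂ) • b i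
  have hγ : ∑ i, (lam i : ℂ) • (ketBra (a i) ⊗ₖ ketBra (b i)) =
      ∑ i, ketBra (a i) ⊗ₖ ketBra (β i) := by
    simp_rw [← kronecker_smul, ofReal_smul_ketBra (hlam _)]
    rfl
  rw [hγ, trB_sum_kronecker] at hrank
  simp_rw [trace_ketBra,
    ofReal_smul_ketBra (Finset.sum_nonneg fun _ _ => Complex.normSq_nonneg _),
    ketBra_kronecker_ketBra, ketBra, rank_sum_vecMulVec_star] at hrank
  exact hrank.not_ge (finrank_span_range_smul_le_finrank_span_range_kronecker _ _ _
    fun i hβ => by simp [hβ])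

/-- If a bipartite state `γ_AB` on `ℂ^{d_A} ⊗ ℂ^{d_B}` has
`rank γ_AB < rank γ_A`, then `γ_AB` is not separable. -/
theorem not_separable_of_rank_lt_rank_marginal {dA dB : ℕ}
    (γ : Matrix (Fin dA × Fin dB) (Fin dA × Fin dB) ℂ)
    (hpsd : γ.PosSemidef) (htr : γ.trace = 1)
    (hrank : γ.rank < (trB γ).rank) :
    ¬ MatrixSeparable γ :=
  not_separable_of_rank_lt_rank_marginal_general γ hrank
end
end

section
/- Let ρ₁, ρ₂ ∈ M_{d_A}(ℂ) be positive definite matrices of trace 1, and set T = ρ₂^{1/2} ρ₁^{−1/2} (positive semidefinite square roots). Then the map γ ↦ (T ⊗ I_{d_B}) γ (T* ⊗ I_{d_B}) is a bijection from the set of bipartite states γ on ℂ^{d_A} ⊗ ℂ^{d_B} with γ_A = ρ₁ onto the set of bipartite states with γ_A = ρ₂; moreover it preserves rank (rank of the image equals rank γ) and preserves separability in both directions (γ is separable if and only if its image is separable). -/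
/-!
`T = ρ₂^{1/2} ρ₁^{-1/2}` is invertible and satisfies `T ρ₁ T* = ρ₂`. The partial trace over `B`
intertwines `γ ↦ (T ⊗ I) γ (T ⊗ I)*` with `ρ ↦ T ρ T*`, so this map sends states with marginal
`ρ₁` to states with marginal `ρ₂`, and the same map for `T⁻¹` inverts it. Conjugation by the
invertible `T ⊗ I` preserves rank, and it sends `|a⟩⟨a| ⊗ |b⟩⟨b|` to `|T a⟩⟨T a| ⊗ |b⟩⟨b|`,
so separability is preserved in both directions.
-/

open Matrix Kronecker
open scoped ComplexOrder

noncomputable section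

/-- The square root of a positive semidefinite matrix, as `Matrix.PosSemidef.sqrt` was defined
in Mathlib (December 2024); the definition has since been removed from Mathlib. -/
def Matrix.PosSemidef.sqrt {n : Type*} [Fintype n] [DecidableEq n] {A : Matrix n n ℂ}
    (hA : A.PosSemidef) : Matrix n n ℂ :=
  (hA.1.eigenvectorUnitary : Matrix n n ℂ) *
    diagonal (fun i => ((Real.sqrt (hA.1.eigenvalues i) : ℝ) : ℂ)) *
    (star hA.1.eigenvectorUnitary : Matrix n n ℂ)

namespace Matrix.PosSemidef

variable {n : Type*} [Fintype n] [DecidableEq n] {A : Matrix n n ℂ}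

lemma conjTranspose_sqrt (hA : A.PosSemidef) : hA.sqrtᴴ = hA.sqrt := by
  rw [← star_eq_conjTranspose]
  simp only [sqrt, star_mul, star_star, Matrix.mul_assoc, star_eq_conjTranspose (diagonal _),
    diagonal_conjTranspose, Pi.star_def, Complex.star_def, Complex.conj_ofReal]

lemma sqrt_mul_self (hA : A.PosSemidef) : hA.sqrt * hA.sqrt = A := by
  have hU : (star hA.1.eigenvectorUnitary : Matrix n n ℂ) * hA.1.eigenvectorUnitary = 1 :=
    Unitary.coe_star_mul_self _
  have hD : diagonal (fun i => ((Real.sqrt (hA.1.eigenvalues i) : ℝ) : ℂ)) *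
      diagonal (fun i => ((Real.sqrt (hA.1.eigenvalues i) : ℝ) : ℂ)) =
      diagonal (RCLike.ofReal ∘ hA.1.eigenvalues) := by
    rw [diagonal_mul_diagonal]
    congr 1; ext i
    rw [← Complex.ofReal_mul, Real.mul_self_sqrt (hA.eigenvalues_nonneg i)]
    rfl
  conv_rhs => rw [hA.1.spectral_theorem, Unitary.conjStarAlgAut_apply]
  simp only [sqrt, Matrix.mul_assoc]
  rw [← Matrix.mul_assoc (star _ : Matrix n n ℂ), hU, Matrix.one_mul,
    ← Matrix.mul_assoc (diagonal _), hD]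

end Matrix.PosSemidef

lemma Matrix.PosDef.isUnit_det_sqrt {n : Type*} [Fintype n] [DecidableEq n]
    {A : Matrix n n ℂ} (hA : A.PosDef) : IsUnit hA.posSemidef.sqrt.det := by
  have hdet : IsUnit A.det := isUnit_iff_ne_zero.mpr hA.det_pos.ne'
  rw [← hA.posSemidef.sqrt_mul_self, det_mul] at hdet
  exact isUnit_of_mul_isUnit_left hdet

lemma sqrt_mul_inv_sqrt_conj {n : Type*} [Fintype n] [DecidableEq n]
    {ρ₁ ρ₂ : Matrix n n ℂ} (h₁ : ρ₁.PosDef) (h₂ : ρ₂.PosSemidef) :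
    h₂.sqrt * h₁.posSemidef.sqrt⁻¹ * ρ₁ * (h₂.sqrt * h₁.posSemidef.sqrt⁻¹)ᴴ = ρ₂ := by
  have hs₁ := h₁.isUnit_det_sqrt
  set s₁ := h₁.posSemidef.sqrt
  calc h₂.sqrt * s₁⁻¹ * ρ₁ * (h₂.sqrt * s₁⁻¹)ᴴ
      = h₂.sqrt * s₁⁻¹ * (s₁ * s₁) * (s₁⁻¹ * h₂.sqrt) := by
        rw [h₁.posSemidef.sqrt_mul_self, conjTranspose_mul, conjTranspose_nonsing_inv,
          h₁.posSemidef.conjTranspose_sqrt, h₂.conjTranspose_sqrt]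
    _ = ρ₂ := by
        simp only [Matrix.mul_assoc, nonsing_inv_mul_cancel_left _ _ hs₁,
          mul_nonsing_inv_cancel_left _ _ hs₁, h₂.sqrt_mul_self]

section LocalConj

variable {ι κ : Type*} [Fintype ι] [Fintype κ] [DecidableEq κ]

def conjA (S : Matrix ι ι ℂ) (γ : Matrix (ι × κ) (ι × κ) ℂ) : Matrix (ι × κ) (ι × κ) ℂ :=
  (S ⊗ₖ (1 : Matrix κ κ ℂ)) * γ * (Sᴴ ⊗ₖ (1 : Matrix κ κ ℂ))

lemma conjA_one [DecidableEq ι] (γ : Matrix (ι × κ) (ι × κ) ℂ) : conjA 1 γ = γ := by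
  simp [conjA]

lemma conjA_conjA (R S : Matrix ι ι ℂ) (γ : Matrix (ι × κ) (ι × κ) ℂ) :
    conjA R (conjA S γ) = conjA (R * S) γ := by
  simp only [conjA, conjTranspose_mul, ← Matrix.mul_assoc]
  rw [← mul_kronecker_mul, Matrix.mul_one, Matrix.mul_assoc _ (Sᴴ ⊗ₖ _), ← mul_kronecker_mul,
    Matrix.mul_one]

lemma Matrix.PosSemidef.conjA {γ : Matrix (ι × κ) (ι × κ) ℂ} (hγ : γ.PosSemidef)
    (S : Matrix ι ι ℂ) : (_root_.conjA S γ).PosSemidef := by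
  have h := hγ.mul_mul_conjTranspose_same (S ⊗ₖ (1 : Matrix κ κ ℂ))
  rwa [conjTranspose_kronecker, conjTranspose_one] at h

variable [DecidableEq ι]

lemma conjA_inv_conjA {S : Matrix ι ι ℂ} (hS : IsUnit S.det) (γ : Matrix (ι × κ) (ι × κ) ℂ) :
    conjA S⁻¹ (conjA S γ) = γ := by
  rw [conjA_conjA, nonsing_inv_mul _ hS, conjA_one]

lemma conjA_conjA_inv {S : Matrix ι ι ℂ} (hS : IsUnit S.det) (γ : Matrix (ι × κ) (ι × κ) ℂ) :
    conjA S (conjA S⁻¹ γ) = γ := by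
  rw [conjA_conjA, mul_nonsing_inv _ hS, conjA_one]

lemma rank_conjA {S : Matrix ι ι ℂ} (hS : IsUnit S.det) (γ : Matrix (ι × κ) (ι × κ) ℂ) :
    (conjA S γ).rank = γ.rank := by
  have hdet {M : Matrix ι ι ℂ} (hM : IsUnit M.det) : IsUnit (M ⊗ₖ (1 : Matrix κ κ ℂ)).det := by
    rw [det_kronecker, det_one, one_pow, mul_one]
    exact hM.pow _
  rw [conjA, rank_mul_eq_left_of_isUnit_det _ _ (hdet (det_conjTranspose S ▸ hS.star)),
    rank_mul_eq_right_of_isUnit_det _ _ (hdet hS)]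

end LocalConj

section Bipartite

variable {dA dB : ℕ}

lemma trB_conjA (S : Matrix (Fin dA) (Fin dA) ℂ)
    (γ : Matrix (Fin dA × Fin dB) (Fin dA × Fin dB) ℂ) :
    trB (conjA S γ) = S * trB γ * Sᴴ := by
  ext j k
  simp only [conjA, trB, Matrix.mul_apply, of_apply, kroneckerMap_apply, one_apply,
    Fintype.sum_prod_type]
  simp only [mul_ite, mul_one, mul_zero, ite_mul, zero_mul, Finset.sum_ite_eq',
    Finset.mem_univ, if_true, Finset.sum_ite_eq, Finset.mul_sum, Finset.sum_mul]
  rw [Finset.sum_comm]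
  exact Finset.sum_congr rfl fun _ _ => Finset.sum_comm

lemma trace_eq_trace_trB (γ : Matrix (Fin dA × Fin dB) (Fin dA × Fin dB) ℂ) :
    γ.trace = (trB γ).trace := by
  simp [Matrix.trace, trB, Fintype.sum_prod_type]

def statesWithMarginal (ρ : Matrix (Fin dA) (Fin dA) ℂ) :
    Set (Matrix (Fin dA × Fin dB) (Fin dA × Fin dB) ℂ) :=
  {γ | γ.PosSemidef ∧ γ.trace = 1 ∧ trB γ = ρ}

lemma mapsTo_conjA_statesWithMarginal {S ρ ρ' : Matrix (Fin dA) (Fin dA) ℂ}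
    (hS : S * ρ * Sᴴ = ρ') (hρ' : ρ'.trace = 1) :
    Set.MapsTo (conjA S) (statesWithMarginal (dB := dB) ρ) (statesWithMarginal ρ') := by
  rintro γ ⟨hγ, -, hγA⟩
  have hA : trB (conjA S γ) = ρ' := by rw [trB_conjA, hγA, hS]
  exact ⟨hγ.conjA S, by rw [trace_eq_trace_trB, hA, hρ'], hA⟩

lemma bijOn_conjA_statesWithMarginal {S ρ ρ' : Matrix (Fin dA) (Fin dA) ℂ}
    (hSdet : IsUnit S.det) (hS : S * ρ * Sᴴ = ρ') (hρ : ρ.trace = 1) (hρ' : ρ'.trace = 1) :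
    Set.BijOn (conjA S) (statesWithMarginal (dB := dB) ρ) (statesWithMarginal ρ') := by
  have hS' : S⁻¹ * ρ' * S⁻¹ᴴ = ρ := by
    rw [← hS, conjTranspose_nonsing_inv]
    simp only [Matrix.mul_assoc, nonsing_inv_mul_cancel_left _ _ hSdet,
      mul_nonsing_inv _ (det_conjTranspose S ▸ hSdet.star), Matrix.mul_one]
  exact Set.InvOn.bijOn ⟨fun γ _ => conjA_inv_conjA hSdet γ, fun γ _ => conjA_conjA_inv hSdet γ⟩
    (mapsTo_conjA_statesWithMarginal hS hρ') (mapsTo_conjA_statesWithMarginal hS' hρ)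

lemma mul_ketBra_mul_conjTranspose {d : ℕ} (M : Matrix (Fin d) (Fin d) ℂ) (v : Fin d → ℂ) :
    M * ketBra v * Mᴴ = ketBra (M *ᵥ v) := by
  rw [ketBra, ketBra, mul_vecMulVec, vecMulVec_mul, star_mulVec]

lemma MatrixSeparable.conjA {γ : Matrix (Fin dA × Fin dB) (Fin dA × Fin dB) ℂ}
    (hγ : MatrixSeparable γ) (S : Matrix (Fin dA) (Fin dA) ℂ) :
    MatrixSeparable (conjA S γ) := by
  obtain ⟨n, lam, a, b, hlam, rfl⟩ := hγ
  refine ⟨n, lam, fun i => S *ᵥ a i, b, hlam, ?_⟩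
  simp only [_root_.conjA, Finset.mul_sum, Finset.sum_mul, Matrix.mul_smul, Matrix.smul_mul,
    ← mul_kronecker_mul, Matrix.one_mul, Matrix.mul_one, mul_ketBra_mul_conjTranspose]

lemma matrixSeparable_conjA_iff {S : Matrix (Fin dA) (Fin dA) ℂ} (hS : IsUnit S.det)
    {γ : Matrix (Fin dA × Fin dB) (Fin dA × Fin dB) ℂ} :
    MatrixSeparable (conjA S γ) ↔ MatrixSeparable γ :=
  ⟨fun h => conjA_inv_conjA hS γ ▸ h.conjA S⁻¹, fun h => h.conjA S⟩

end Bipartite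

/-- For positive definite trace-one `ρ₁, ρ₂ ∈ M_{d_A}(ℂ)` and
`T = ρ₂^{1/2} ρ₁^{-1/2}`, the map `γ ↦ (T ⊗ I) γ (T* ⊗ I)` is a bijection from the bipartite
states with `γ_A = ρ₁` onto those with `γ_A = ρ₂`; moreover it preserves rank and preserves
separability in both directions. -/
theorem state_bijection_marginal_change {dA dB : ℕ}
    (ρ1 ρ2 : Matrix (Fin dA) (Fin dA) ℂ)
    (h1 : ρ1.PosDef) (h2 : ρ2.PosDef) (ht1 : ρ1.trace = 1) (ht2 : ρ2.trace = 1)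
    (T : Matrix (Fin dA) (Fin dA) ℂ)
    (hT : T = h2.posSemidef.sqrt * (h1.posSemidef.sqrt)⁻¹) :
    Set.BijOn
      (fun γ : Matrix (Fin dA × Fin dB) (Fin dA × Fin dB) ℂ =>
        (T ⊗ₖ (1 : Matrix (Fin dB) (Fin dB) ℂ)) * γ *
          (Tᴴ ⊗ₖ (1 : Matrix (Fin dB) (Fin dB) ℂ)))
      {γ | γ.PosSemidef ∧ γ.trace = 1 ∧ trB γ = ρ1}
      {γ | γ.PosSemidef ∧ γ.trace = 1 ∧ trB γ = ρ2} ∧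
    ∀ γ : Matrix (Fin dA × Fin dB) (Fin dA × Fin dB) ℂ,
      γ.PosSemidef → γ.trace = 1 → trB γ = ρ1 →
        ((T ⊗ₖ (1 : Matrix (Fin dB) (Fin dB) ℂ)) * γ *
            (Tᴴ ⊗ₖ (1 : Matrix (Fin dB) (Fin dB) ℂ))).rank = γ.rank ∧
        (MatrixSeparable γ ↔
          MatrixSeparable
            ((T ⊗ₖ (1 : Matrix (Fin dB) (Fin dB) ℂ)) * γ *
              (Tᴴ ⊗ₖ (1 : Matrix (Fin dB) (Fin dB) ℂ)))) := by
  subst hT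
  have hTdet : IsUnit (h2.posSemidef.sqrt * h1.posSemidef.sqrt⁻¹).det := by
    rw [det_mul]
    exact h2.isUnit_det_sqrt.mul (isUnit_nonsing_inv_det _ h1.isUnit_det_sqrt)
  exact ⟨bijOn_conjA_statesWithMarginal hTdet (sqrt_mul_inv_sqrt_conj h1 h2.posSemidef) ht1 ht2,
    fun γ _ _ _ => ⟨rank_conjA hTdet γ, (matrixSeparable_conjA_iff hTdet).symm⟩⟩
end
end
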